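/- Let Δ be a k-dimensional simplicial complex on [s] with Stanley-Reisner ideal I_Δ. Suppose α ∈ ℤ^s satisfies G_α ∈ Δ and the reduced simplicial homology H̃_{k−|G_α|}(Δ_α(I_Δ^{(n)}); K) ≠ 0. Then α_i ≤ n − 1 for every i ∈ [s]. -/

import Mathlib

open MvPolynomial

variable (K : Type) [Field K] {N : ℕ}

/-- The "negative support" `G_α = {i : α i < 0}` of an exponent vector `α ∈ ℤ^N`. -/
def negSupp (α : Fin N → ℤ) : Finset (Fin N) :=
  Finset.univ.filter (fun i => α i < 0)

/-- The multiplicative set generated by the variables `x_i`, `i ∈ W`. -/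
noncomputable def varMonoid (W : Finset (Fin N)) : Submonoid (MvPolynomial (Fin N) K) :=
  Submonoid.closure ((fun i => (X i : MvPolynomial (Fin N) K)) '' ↑W)

/-- The Laurent monomial `x^α` in the localization `S[x_i^{-1} : i ∈ W]`,
for `α ∈ ℤ^N` whose negative support is contained in `W`. -/
noncomputable def xPow (α : Fin N → ℤ) (W : Finset (Fin N)) (h : negSupp α ⊆ W) :
    Localization (varMonoid K W) :=
  algebraMap (MvPolynomial (Fin N) K) _ (∏ i, X i ^ (α i).toNat) *
    IsLocalization.mk' (Localization (varMonoid K W)) (1 : MvPolynomial (Fin N) K)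
      (⟨∏ i ∈ negSupp α, X i ^ (-(α i)).toNat,
        Submonoid.prod_mem _ (fun i hi =>
          pow_mem (Submonoid.subset_closure
            (Set.mem_image_of_mem _ (Finset.mem_coe.mpr (h hi)))) _)⟩ : varMonoid K W)

/-- The degree complex `Δ_α(I)` of a monomial ideal `I`:
`F ∈ Δ_α(I)` iff `F ⊆ [N] ∖ G_α` and `x^α ∉ I·S[x_i^{-1} : i ∈ F ∪ G_α]`. -/
def degreeComplex (I : Ideal (MvPolynomial (Fin N) K)) (α : Fin N → ℤ) :
    Set (Finset (Fin N)) :=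
  {F | Disjoint F (negSupp α) ∧
    xPow K α (F ∪ negSupp α) (Finset.subset_union_right) ∉
      Ideal.map (algebraMap (MvPolynomial (Fin N) K)
        (Localization (varMonoid K (F ∪ negSupp α)))) I}

/-- The module of simplicial `K`-chains of `Δ` spanned by the faces of cardinality `m`. -/
abbrev chainModule (Δ : Set (Finset (Fin N))) (m : ℕ) : Type :=
  {F : Finset (Fin N) // F ∈ Δ ∧ F.card = m} →₀ K

open Classical in
/-- The simplicial boundary map from `m`-cardinality+1 chains to `m`-cardinality chains,
sending a face `F` to `∑_{i ∈ F} (-1)^{|{j ∈ F : j < i}|} (F ∖ {i})`. -/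
noncomputable def bdry (Δ : Set (Finset (Fin N))) (m : ℕ) :
    chainModule K Δ (m + 1) →ₗ[K] chainModule K Δ m :=
  Finsupp.lsum K (fun F =>
    ∑ i ∈ F.1.attach,
      ((-1 : K) ^ (F.1.filter (fun j => j < i.1)).card) •
        (if h : (F.1.erase i.1) ∈ Δ then
          Finsupp.lsingle (⟨F.1.erase i.1, h, by
            simp [Finset.card_erase_of_mem i.2, F.2.2]⟩ :
              {G : Finset (Fin N) // G ∈ Δ ∧ G.card = m})
        else 0))

/-- The full boundary map `∂_m : C_m → C_{m-1}`, with `∂_0 = 0`. -/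
noncomputable def bdryFrom (Δ : Set (Finset (Fin N))) :
    (m : ℕ) → (chainModule K Δ m →ₗ[K] chainModule K Δ (m - 1))
  | 0 => 0
  | (n + 1) => bdry K Δ n

/-- The reduced simplicial homology `H̃_{m-1}(Δ; K) = ker ∂_m / im ∂_{m+1}`,
indexed by the cardinality level `m` (so dimension `m - 1`). -/
noncomputable def homologyAtLevel (Δ : Set (Finset (Fin N))) (m : ℕ) : Type :=
  letI : HasQuotient (LinearMap.ker (bdryFrom K Δ m))
      (Submodule K (LinearMap.ker (bdryFrom K Δ m))) :=
      Submodule.hasQuotient (R := K) (M := LinearMap.ker (bdryFrom K Δ m))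
  LinearMap.ker (bdryFrom K Δ m) ⧸
    Submodule.comap (LinearMap.ker (bdryFrom K Δ m)).subtype
      (LinearMap.range (bdry K Δ m))

/-- `H̃_d(Δ; K) ≠ 0`, for an arbitrary integer dimension `d`
(nonzero is only possible when `d ≥ -1`). -/
def reducedHomologyNonzero (Δ : Set (Finset (Fin N))) (d : ℤ) : Prop :=
  ∃ m : ℕ, (m : ℤ) = d + 1 ∧ Nontrivial (homologyAtLevel K Δ m)

/-- The Stanley–Reisner ideal of `Δ`, generated by the squarefree monomials
`x_F = ∏_{i ∈ F} x_i` over the non-faces `F` of `Δ`. -/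
noncomputable def stanleyReisner (Δ : Set (Finset (Fin N))) : Ideal (MvPolynomial (Fin N) K) :=
  Ideal.span {f | ∃ F : Finset (Fin N), F ∉ Δ ∧ f = ∏ i ∈ F, X i}

/-- The monomial prime `P_F = (x_i : i ∉ F)`. -/
noncomputable def facePrime (F : Finset (Fin N)) : Ideal (MvPolynomial (Fin N) K) :=
  Ideal.span {f | ∃ i : Fin N, i ∉ F ∧ f = X i}

/-- The set of facets (maximal faces) of `Δ`. -/
def facets (Δ : Set (Finset (Fin N))) : Set (Finset (Fin N)) :=
  {F | F ∈ Δ ∧ ∀ G ∈ Δ, F ⊆ G → F = G}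

/-- `Δ` is a simplicial complex: closed under taking subsets. -/
def DownClosed (Δ : Set (Finset (Fin N))) : Prop :=
  ∀ F ∈ Δ, ∀ G : Finset (Fin N), G ⊆ F → G ∈ Δ

/-- The `n`-th symbolic power `I_Δ^{(n)} = ⋂_{F facet of Δ} P_F^n`
of the Stanley–Reisner ideal of `Δ`. -/
noncomputable def symbolicPowerSR (Δ : Set (Finset (Fin N))) (n : ℕ) : Ideal (MvPolynomial (Fin N) K) :=
  ⨅ F ∈ facets Δ, (facePrime K F) ^ n

/-- The simplicial complex `Δ(I) = {F : x_F ∉ √I}` attached to a monomial ideal `I`. -/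
def complexOfIdeal (I : Ideal (MvPolynomial (Fin N) K)) : Set (Finset (Fin N)) :=
  {F | (∏ i ∈ F, X i) ∉ I.radical}

/-- The set of degrees `t` in which the `i`-th graded local cohomology module
`H^i_m(S/I)_t` of a monomial quotient is nonzero; by Takayama's formula this is
expressed through the degree complexes: `H^i_m(S/I)_α ≠ 0` iff `G_α ∈ Δ(I)` and
`H̃_{i - |G_α| - 1}(Δ_α(I); K) ≠ 0`. -/
def localCohNonzeroDegrees (i : ℕ) (I : Ideal (MvPolynomial (Fin N) K)) : Set ℤ :=
  {t | ∃ α : Fin N → ℤ, (∑ j, α j) = t ∧ negSupp α ∈ complexOfIdeal K I ∧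
    reducedHomologyNonzero K (degreeComplex K I α) ((i : ℤ) - (negSupp α).card - 1)}

/-- The `a_i`-invariant `a_i(S/I) = max {t : H^i_m(S/I)_t ≠ 0}` of a monomial quotient,
via Takayama's formula. -/
noncomputable def aInvariant (i : ℕ) (I : Ideal (MvPolynomial (Fin N) K)) : ℤ :=
  sSup (localCohNonzeroDegrees K i I)

/-- The link of a face `G` in `Δ`. -/
def link (Δ : Set (Finset (Fin N))) (G : Finset (Fin N)) : Set (Finset (Fin N)) :=
  {F | Disjoint F G ∧ F ∪ G ∈ Δ}

/-- The pure `k`-skeleton of `Γ`: the subcomplex generated by the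
`k`-dimensional (i.e. `(k+1)`-element) faces of `Γ`. -/
def pureSkeleton (Γ : Set (Finset (Fin N))) (k : ℕ) : Set (Finset (Fin N)) :=
  {F | ∃ G ∈ Γ, G.card = k + 1 ∧ F ⊆ G}

/-!
Suppose `α i ≥ n` and let `m = k + 1 - |G_α|`. If `F` is a face of `Δ_α(I_Δ^{(n)})` with
`|F| = m`, then `F ∪ G_α` lies in a facet `G` of `Δ` with `∑_{j ∉ G} α_j⁺ < n` (otherwise
`x_{F ∪ G_α}^n x^{α⁺}` lies in every `P_G^n`, hence in `I_Δ^{(n)}`, and then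
`x^α ∈ I_Δ^{(n)} S[x_j^{-1} : j ∈ F ∪ G_α]`), and by counting `F ∪ G_α = G`. Hence `i ∈ G`,
and `i ∈ F` because `α i ≥ 0`. So every top face contains `i`, which makes `F` the only top
face whose boundary involves `F ∖ {i}`: the boundary map on top chains is injective and the
top reduced homology vanishes.
-/

section SimplicialHomology

variable {Γ : Set (Finset (Fin N))}

lemma eq_and_eq_of_erase_eq_erase {ι : Type*} [DecidableEq ι] {F G : Finset ι} {i j : ι} (hiF : i ∈ F)
    (hiG : i ∈ G) (h : G.erase j = F.erase i) : j = i ∧ G = F := by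
  obtain rfl : j = i := by
    by_contra hji
    have : i ∈ F.erase i := h ▸ Finset.mem_erase.mpr ⟨Ne.symm hji, hiG⟩
    exact Finset.notMem_erase i F this
  exact ⟨rfl, Finset.erase_injOn' j hiG hiF h⟩

open Classical in
lemma bdry_apply_erase (hΓ : DownClosed Γ) {m : ℕ} {i : Fin N}
    (hi : ∀ F ∈ Γ, F.card = m + 1 → i ∈ F) (z : chainModule K Γ (m + 1))
    (F : {F : Finset (Fin N) // F ∈ Γ ∧ F.card = m + 1}) :
    bdry K Γ m z ⟨F.1.erase i, hΓ _ F.2.1 _ (Finset.erase_subset _ _),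
      by rw [Finset.card_erase_of_mem (hi _ F.2.1 F.2.2), F.2.2, Nat.add_sub_cancel]⟩ =
      (-1) ^ (F.1.filter (· < i)).card * z F := by
  have hiF := hi _ F.2.1 F.2.2
  have hterm : ∀ (G : {G : Finset (Fin N) // G ∈ Γ ∧ G.card = m + 1}) (j : G.1),
      G ≠ F ∨ j.1 ≠ i → ((if h : G.1.erase j.1 ∈ Γ then Finsupp.lsingle (R := K)
        (⟨G.1.erase j.1, h, by simp [Finset.card_erase_of_mem j.2, G.2.2]⟩ :
          {G : Finset (Fin N) // G ∈ Γ ∧ G.card = m}) else 0) (z G))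
        ⟨F.1.erase i, hΓ _ F.2.1 _ (Finset.erase_subset _ _),
          by rw [Finset.card_erase_of_mem hiF, F.2.2, Nat.add_sub_cancel]⟩ = 0 := by
    intro G j hne
    split_ifs with h
    · refine Finsupp.single_eq_of_ne fun heq => ?_
      obtain ⟨hji, hGF⟩ := eq_and_eq_of_erase_eq_erase hiF (hi _ G.2.1 G.2.2)
        (congrArg Subtype.val heq).symm
      exact hne.elim (· (Subtype.ext hGF)) (· hji)
    · rfl
  rw [bdry, Finsupp.lsum_apply, Finsupp.sum_apply, Finsupp.sum]
  simp only [LinearMap.sum_apply, Finsupp.finsetSum_apply, LinearMap.smul_apply,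
    Finsupp.smul_apply]
  rw [Finset.sum_eq_single F (fun G _ hGF => Finset.sum_eq_zero fun j _ => by
      rw [hterm G j (.inl hGF), smul_zero])
    (fun hF => by simp [Finsupp.notMem_support_iff.mp hF])]
  rw [Finset.sum_eq_single ⟨i, hiF⟩ (fun j _ hj => by
      rw [hterm F j (.inr fun h => hj (Subtype.ext h)), smul_zero])
    (fun h => absurd (Finset.mem_attach _ _) h)]
  rw [dif_pos (hΓ _ F.2.1 _ (Finset.erase_subset _ _)), Finsupp.lsingle_apply,
    Finsupp.single_eq_same, smul_eq_mul]

lemma bdry_injective_of_forall_mem (hΓ : DownClosed Γ) {m : ℕ} {i : Fin N}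
    (hi : ∀ F ∈ Γ, F.card = m + 1 → i ∈ F) : Function.Injective (bdry K Γ m) := by
  refine (injective_iff_map_eq_zero _).mpr fun z hz => Finsupp.ext fun F => ?_
  have hzF := bdry_apply_erase K hΓ hi z F
  rw [hz, Finsupp.zero_apply, eq_comm] at hzF
  exact (mul_eq_zero.mp hzF).resolve_left (pow_ne_zero _ (neg_ne_zero.mpr one_ne_zero))

lemma subsingleton_homologyAtLevel_of_forall_mem (hΓ : DownClosed Γ) {m : ℕ} {i : Fin N}
    (hi : ∀ F ∈ Γ, F.card = m → i ∈ F) : Subsingleton (homologyAtLevel K Γ m) := by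
  suffices Subsingleton (LinearMap.ker (bdryFrom K Γ m)) from
    (Submodule.Quotient.mk_surjective _).subsingleton
  cases m with
  | zero =>
    have : IsEmpty {F : Finset (Fin N) // F ∈ Γ ∧ F.card = 0} :=
      ⟨fun F => by simpa [Finset.card_eq_zero.mp F.2.2] using hi _ F.2.1 F.2.2⟩
    infer_instance
  | succ m =>
    rw [bdryFrom, LinearMap.ker_eq_bot.mpr (bdry_injective_of_forall_mem K hΓ hi)]
    infer_instance

end SimplicialHomology

section DegreeComplex

lemma prod_X_mem_varMonoid (W : Finset (Fin N)) :
    (∏ j ∈ W, (X j : MvPolynomial (Fin N) K)) ∈ varMonoid K W :=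
  Submonoid.prod_mem _ fun _ hj =>
    Submonoid.subset_closure (Set.mem_image_of_mem _ (Finset.mem_coe.mpr hj))

lemma xPow_mem_map_of_mul_mem (I : Ideal (MvPolynomial (Fin N) K)) (α : Fin N → ℤ)
    {W : Finset (Fin N)} (hW : negSupp α ⊆ W) {u : MvPolynomial (Fin N) K}
    (hu : u ∈ varMonoid K W) (huα : u * ∏ i, X i ^ (α i).toNat ∈ I) :
    xPow K α W hW ∈ I.map (algebraMap _ (Localization (varMonoid K W))) := by
  refine Ideal.mul_mem_right _ _ ?_
  rw [← Ideal.unit_mul_mem_iff_mem _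
    (IsLocalization.map_units (Localization (varMonoid K W)) ⟨u, hu⟩), ← map_mul]
  exact Ideal.mem_map_of_mem _ huα

lemma xPow_mem_map_mono (I : Ideal (MvPolynomial (Fin N) K)) (α : Fin N → ℤ)
    {V W : Finset (Fin N)} (hV : negSupp α ⊆ V) (hVW : V ⊆ W)
    (h : xPow K α V hV ∈ I.map (algebraMap _ (Localization (varMonoid K V)))) :
    xPow K α W (hV.trans hVW) ∈ I.map (algebraMap _ (Localization (varMonoid K W))) := by
  have hle : varMonoid K V ≤ (varMonoid K W).comap (RingHom.id _) :=
    Submonoid.closure_mono (Set.image_mono (Finset.coe_subset.mpr hVW))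
  let φ := IsLocalization.map (Localization (varMonoid K W)) (RingHom.id _) hle
    (M := varMonoid K V) (S := Localization (varMonoid K V))
  have hφ : φ (xPow K α V hV) = xPow K α W (hV.trans hVW) := by
    rw [xPow, xPow, map_mul, IsLocalization.map_eq, IsLocalization.map_mk']
    rfl
  have hφI := Ideal.mem_map_of_mem φ h
  rwa [Ideal.map_map, IsLocalization.map_comp, hφ] at hφI

lemma degreeComplex_downClosed (I : Ideal (MvPolynomial (Fin N) K)) (α : Fin N → ℤ) :
    DownClosed (degreeComplex K I α) := fun _ hF _ hGF =>
  ⟨hF.1.mono_left hGF, fun hG => hF.2 <| xPow_mem_map_mono K I α Finset.subset_union_right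
    (Finset.union_subset_union_left hGF) hG⟩

end DegreeComplex

section SymbolicPower

lemma X_mem_facePrime {F : Finset (Fin N)} {i : Fin N} (hi : i ∉ F) :
    (X i : MvPolynomial (Fin N) K) ∈ facePrime K F :=
  Ideal.subset_span ⟨i, hi, rfl⟩

lemma prod_X_pow_mem_facePrime_pow (F : Finset (Fin N)) (γ : Fin N → ℕ) {n : ℕ}
    (hn : n ≤ ∑ j ∈ Fᶜ, γ j) :
    (∏ j, (X j : MvPolynomial (Fin N) K) ^ γ j) ∈ facePrime K F ^ n := by
  rw [← Finset.prod_mul_prod_compl F]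
  refine Ideal.mul_mem_left _ _ (Ideal.pow_le_pow_right hn ?_)
  rw [← Finset.prod_pow_eq_pow_sum]
  exact Ideal.prod_mem_prod fun _ hj =>
    Ideal.pow_mem_pow (X_mem_facePrime K (Finset.mem_compl.mp hj)) _

lemma prod_X_pow_mul_prod_X_pow_mem_symbolicPowerSR (Δ : Set (Finset (Fin N))) (n : ℕ)
    (W : Finset (Fin N)) (γ : Fin N → ℕ)
    (hγ : ∀ G ∈ facets Δ, W ⊆ G → n ≤ ∑ j ∈ Gᶜ, γ j) :
    (∏ j ∈ W, X j) ^ n * ∏ j, (X j : MvPolynomial (Fin N) K) ^ γ j ∈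
      symbolicPowerSR K Δ n := by
  refine Ideal.mem_iInf.mpr fun G => Ideal.mem_iInf.mpr fun hG => ?_
  by_cases hWG : W ⊆ G
  · exact Ideal.mul_mem_left _ _ (prod_X_pow_mem_facePrime_pow K G γ (hγ G hG hWG))
  · obtain ⟨j, hjW, hjG⟩ := Finset.not_subset.mp hWG
    refine Ideal.mul_mem_right _ _ (Ideal.pow_mem_pow ?_ n)
    rw [← Finset.prod_erase_mul _ _ hjW]
    exact Ideal.mul_mem_left _ _ (X_mem_facePrime K hjG)

lemma exists_facet_of_mem_degreeComplex {Δ : Set (Finset (Fin N))} {n : ℕ}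
    {α : Fin N → ℤ} {F : Finset (Fin N)}
    (hF : F ∈ degreeComplex K (symbolicPowerSR K Δ n) α) :
    ∃ G ∈ facets Δ, F ∪ negSupp α ⊆ G ∧ ∑ j ∈ Gᶜ, (α j).toNat < n := by
  by_contra! h
  exact hF.2 <| xPow_mem_map_of_mul_mem K _ α _ (pow_mem (prod_X_mem_varMonoid K _) n)
    (prod_X_pow_mul_prod_X_pow_mem_symbolicPowerSR K Δ n _ _ h)

lemma mem_of_mem_degreeComplex_of_card_eq {Δ : Set (Finset (Fin N))} {k n : ℕ}
    (hdim : ∀ G ∈ Δ, G.card ≤ k + 1) {α : Fin N → ℤ} {i : Fin N} (hαi : (n : ℤ) ≤ α i)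
    {F : Finset (Fin N)} (hF : F ∈ degreeComplex K (symbolicPowerSR K Δ n) α)
    (hcard : F.card + (negSupp α).card = k + 1) : i ∈ F := by
  obtain ⟨G, hG, hFG, hsum⟩ := exists_facet_of_mem_degreeComplex K hF
  have hFG_eq : F ∪ negSupp α = G := Finset.eq_of_subset_of_card_le hFG <| by
    rw [Finset.card_union_of_disjoint hF.1, hcard]
    exact hdim G hG.1
  have hiG : i ∈ G := by
    by_contra hiG
    have := Finset.single_le_sum (f := fun j => (α j).toNat) (fun _ _ => Nat.zero_le _)
      (Finset.mem_compl.mpr hiG)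
    omega
  rw [← hFG_eq, Finset.mem_union] at hiG
  refine hiG.resolve_right fun hneg => ?_
  have : α i < 0 := (Finset.mem_filter.mp hneg).2
  omega

end SymbolicPower

theorem entries_le_of_reducedHomology_nonzero
    (Δ : Set (Finset (Fin N))) (k : ℕ)
    (hdim : ∀ G ∈ Δ, G.card ≤ k + 1)
    (n : ℕ) (α : Fin N → ℤ)
    (hH : reducedHomologyNonzero K (degreeComplex K (symbolicPowerSR K Δ n) α)
      ((k : ℤ) - (negSupp α).card)) :
    ∀ i : Fin N, α i ≤ (n : ℤ) - 1 := by
  intro i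
  by_contra! hlt
  obtain ⟨m, hm, hnt⟩ := hH
  have hαi : (n : ℤ) ≤ α i := by omega
  have htop : ∀ F ∈ degreeComplex K (symbolicPowerSR K Δ n) α, F.card = m → i ∈ F :=
    fun F hF hFm => mem_of_mem_degreeComplex_of_card_eq K hdim hαi hF (by omega)
  exact not_subsingleton _
    (subsingleton_homologyAtLevel_of_forall_mem K (degreeComplex_downClosed K _ α) htop)
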